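/- Let c, A be nonzero complex numbers, b an integer, and E, K nonnegative reals. Let (F_g), (F'_g), (e_g) be sequences of complex numbers such that for all sufficiently large g: F_g = c·A^{b−2g}·(2g−b−1)!·(1 + e_g), |e_g| ≤ E/g, and |F'_g| ≤ K·(2g−b−1)!·|A|^{b−2g}. Then the sequence g ↦ F'_g · ( (2g−b+1)! / ((2g−b−1)!·F_{g+1}) − (2g−b−1)!·F_{g−1} / ((2g−b−3)!·F_g²) ) tends to 0 as g → ∞. -/

import Mathlib

/-! Substituting the large-order ansatz for `F_{g-1}, F_g, F_{g+1}`, all factorials cancel and the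
bracket becomes exactly `A² / (c·A^{b-2g}·(2g-b-1)!)` times
`δ_g = (1 + e_{g+1})⁻¹ - (1 + e_{g-1}) / (1 + e_g)²`. The bound on `F'_g` cancels this prefactor up
to the constant `K·|A|²/|c|`, while `δ_g → 0` because `e_g → 0`. -/

open Filter Topology

theorem tendsto_inv_sub_div_sq {𝕜 α : Type*} [NormedField 𝕜] {l : Filter α} {p q r : α → 𝕜}
    (hp : Tendsto p l (𝓝 1)) (hq : Tendsto q l (𝓝 1)) (hr : Tendsto r l (𝓝 1)) :
    Tendsto (fun g => (p g)⁻¹ - r g / q g ^ 2) l (𝓝 0) := by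
  simpa using (hp.inv₀ one_ne_zero).sub (hr.div (hq.pow 2) (by norm_num))

theorem div_mul_sub_mul_div_mul_sq_eq {𝕜 : Type*} [Field 𝕜] {c x u f₀ f₁ f₂ p q r : 𝕜}
    (hf₀ : f₀ ≠ 0) (hf₂ : f₂ ≠ 0) :
    f₂ / (f₁ * (c * (x / u) * f₂ * p)) - f₁ * (c * (x * u) * f₀ * r) / (f₀ * (c * x * f₁ * q) ^ 2)
      = u / (c * x * f₁) * (p⁻¹ - r / q ^ 2) := by
  field_simp

theorem norm_mul_div_mul_le {𝕜 : Type*} [NormedField 𝕜] {y c x f u δ : 𝕜} {K : ℝ}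
    (hx : x ≠ 0) (hf : f ≠ 0) (hy : ‖y‖ ≤ K * ‖f‖ * ‖x‖) :
    ‖y * (u / (c * x * f) * δ)‖ ≤ K * ‖u‖ / ‖c‖ * ‖δ‖ := by
  have hy' : ‖y‖ / (‖f‖ * ‖x‖) ≤ K := by
    rw [div_le_iff₀ (by positivity), ← mul_assoc]
    exact hy
  calc ‖y * (u / (c * x * f) * δ)‖ = ‖y‖ / (‖f‖ * ‖x‖) * (‖u‖ / ‖c‖ * ‖δ‖) := by
        simp only [norm_mul, norm_div]; ring
    _ ≤ K * (‖u‖ / ‖c‖ * ‖δ‖) := by gcongr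
    _ = K * ‖u‖ / ‖c‖ * ‖δ‖ := by ring

section LargeOrder

variable {𝕜 : Type*} [Field 𝕜] {c A : 𝕜} {b : ℤ} {F e : ℕ → 𝕜}
  (hF : ∀ᶠ g : ℕ in atTop,
    F g = c * A ^ (b - 2 * (g : ℤ)) * (Nat.factorial (2 * (g : ℤ) - b - 1).toNat : 𝕜) * (1 + e g))
include hF

theorem eventually_succ_eq_of_large_order (hA : A ≠ 0) :
    ∀ᶠ g : ℕ in atTop, F (g + 1) = c * (A ^ (b - 2 * (g : ℤ)) / A ^ 2) *
      (Nat.factorial (2 * (g : ℤ) - b + 1).toNat : 𝕜) * (1 + e (g + 1)) := by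
  filter_upwards [(tendsto_add_atTop_nat 1).eventually hF] with g hg
  rw [hg, show b - 2 * ((g + 1 : ℕ) : ℤ) = b - 2 * (g : ℤ) - 2 by push_cast; ring,
    show 2 * ((g + 1 : ℕ) : ℤ) - b - 1 = 2 * (g : ℤ) - b + 1 by push_cast; ring, zpow_sub₀ hA]
  norm_cast

theorem eventually_pred_eq_of_large_order (hA : A ≠ 0) :
    ∀ᶠ g : ℕ in atTop, F (g - 1) = c * (A ^ (b - 2 * (g : ℤ)) * A ^ 2) *
      (Nat.factorial (2 * (g : ℤ) - b - 3).toNat : 𝕜) * (1 + e (g - 1)) := by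
  filter_upwards [(tendsto_sub_atTop_nat 1).eventually hF, eventually_ge_atTop 1] with g hg hg1
  rw [hg, show b - 2 * ((g - 1 : ℕ) : ℤ) = b - 2 * (g : ℤ) + 2 by push_cast [hg1]; ring,
    show 2 * ((g - 1 : ℕ) : ℤ) - b - 1 = 2 * (g : ℤ) - b - 3 by push_cast [hg1]; ring, zpow_add₀ hA]
  norm_cast

end LargeOrder

theorem instanton_action_holomorphic_large_order_general
    (c A : ℂ) (hA : A ≠ 0) (b : ℤ) (E K : ℝ)
    (F F' e : ℕ → ℂ)
    (hF : ∀ᶠ g : ℕ in atTop,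
      F g = c * A ^ (b - 2 * (g : ℤ)) *
        (Nat.factorial (2 * (g : ℤ) - b - 1).toNat : ℂ) * (1 + e g))
    (he : ∀ᶠ g : ℕ in atTop, ‖e g‖ ≤ E / (g : ℝ))
    (hF' : ∀ᶠ g : ℕ in atTop,
      ‖F' g‖ ≤ K * (Nat.factorial (2 * (g : ℤ) - b - 1).toNat : ℝ) *
        ‖A‖ ^ (b - 2 * (g : ℤ))) :
    Tendsto
      (fun g : ℕ => F' g *
        ((Nat.factorial (2 * (g : ℤ) - b + 1).toNat : ℂ) /
            ((Nat.factorial (2 * (g : ℤ) - b - 1).toNat : ℂ) * F (g + 1))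
          - (Nat.factorial (2 * (g : ℤ) - b - 1).toNat : ℂ) * F (g - 1) /
            ((Nat.factorial (2 * (g : ℤ) - b - 3).toNat : ℂ) * (F g) ^ 2)))
      atTop (nhds 0) := by
  have he0 : Tendsto e atTop (𝓝 0) :=
    squeeze_zero_norm' he (tendsto_const_div_atTop_nhds_zero_nat E)
  have h1 : Tendsto (fun g => 1 + e g) atTop (𝓝 1) := by simpa using he0.const_add 1
  have hδ := tendsto_inv_sub_div_sq (h1.comp (tendsto_add_atTop_nat 1)) h1
    (h1.comp (tendsto_sub_atTop_nat 1))
  refine squeeze_zero_norm' ?_ (by simpa using hδ.norm.const_mul (K * ‖A‖ ^ 2 / ‖c‖))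
  filter_upwards [hF, eventually_succ_eq_of_large_order hF hA,
    eventually_pred_eq_of_large_order hF hA, hF'] with g hFg hFsucc hFpred hF'g
  have hfact (n : ℕ) : (n.factorial : ℂ) ≠ 0 := Nat.cast_ne_zero.2 n.factorial_ne_zero
  rw [hFsucc, hFpred, hFg, div_mul_sub_mul_div_mul_sq_eq (hfact _) (hfact _)]
  refine (norm_mul_div_mul_le (zpow_ne_zero _ hA) (hfact _) ?_).trans_eq (by rw [norm_pow])
  simpa only [norm_zpow, Complex.norm_natCast] using hF'g

/-- Analytic core of the proof that the instanton action is holomorphic: if the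
perturbative free energies `F_g` behave like `c·A^{b−2g}·(2g−b−1)!·(1+e_g)` with
`|e_g| ≤ E/g`, and the propagator derivatives `F'_g` satisfy
`|F'_g| ≤ K·(2g−b−1)!·|A|^{b−2g}`, then
`F'_g·( (2g−b+1)!/((2g−b−1)!·F_{g+1}) − (2g−b−1)!·F_{g−1}/((2g−b−3)!·F_g²) ) → 0`. -/
theorem instanton_action_holomorphic_large_order
    (c A : ℂ) (hc : c ≠ 0) (hA : A ≠ 0) (b : ℤ) (E K : ℝ) (hE : 0 ≤ E) (hK : 0 ≤ K)
    (F F' e : ℕ → ℂ)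
    (hF : ∀ᶠ g : ℕ in atTop,
      F g = c * A ^ (b - 2 * (g : ℤ)) *
        (Nat.factorial (2 * (g : ℤ) - b - 1).toNat : ℂ) * (1 + e g))
    (he : ∀ᶠ g : ℕ in atTop, ‖e g‖ ≤ E / (g : ℝ))
    (hF' : ∀ᶠ g : ℕ in atTop,
      ‖F' g‖ ≤ K * (Nat.factorial (2 * (g : ℤ) - b - 1).toNat : ℝ) *
        ‖A‖ ^ (b - 2 * (g : ℤ))) :
    Tendsto
      (fun g : ℕ => F' g *
        ((Nat.factorial (2 * (g : ℤ) - b + 1).toNat : ℂ) /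
            ((Nat.factorial (2 * (g : ℤ) - b - 1).toNat : ℂ) * F (g + 1))
          - (Nat.factorial (2 * (g : ℤ) - b - 1).toNat : ℂ) * F (g - 1) /
            ((Nat.factorial (2 * (g : ℤ) - b - 3).toNat : ℂ) * (F g) ^ 2)))
      atTop (nhds 0) :=
  instanton_action_holomorphic_large_order_general c A hA b E K F F' e hF he hF'
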